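/- arXiv:2310.18692 — 6 statements merged into one kernel-verified Lean document; each statement's English description precedes it below -/
import Mathlib

section
/- Let d be a connected block design with v treatments, b blocks each of size k, incidence matrix N (with nonnegative integer entries, column sums k), and replication vector (r_1,…,r_v) with R = diag(r_1,…,r_v), and intrablock matrix C = R − (1/k) N Nᵀ. Then tr(C) = bk − (1/k) ∑_{i,j} n_{ij}^2 ≤ bk − b = b(k−1), and hence tr(C^+) ≥ (v−1)^2 / (b(k−1)). -/
open BigOperators Matrix

/-- The four Penrose conditions: `Ap` is the Moore–Penrose inverse of `A`. -/
def IsMoorePenrose {n : ℕ} (A Ap : Matrix (Fin n) (Fin n) ℝ) : Prop :=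
  A * Ap * A = A ∧ Ap * A * Ap = Ap ∧ (A * Ap)ᵀ = A * Ap ∧ (Ap * A)ᵀ = Ap * A

lemma ctr_eq {m n : Type*} [Fintype m] [Fintype n] (A : Matrix m n ℝ) : Aᴴ = Aᵀ := by
  ext i j; simp [Matrix.conjTranspose_apply]

lemma mp_unique {n : ℕ} {A B B' : Matrix (Fin n) (Fin n) ℝ}
    (h : IsMoorePenrose A B) (h' : IsMoorePenrose A B') : B = B' := by
  obtain ⟨h1, h2, h3, h4⟩ := h
  obtain ⟨h1', h2', h3', h4'⟩ := h'
  have key : A*B = (A*B')*(A*B) := by rw [← Matrix.mul_assoc, h1']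
  have keyBA : B*A = (B*A)*(B'*A) := by
    rw [Matrix.mul_assoc B A (B'*A), ← Matrix.mul_assoc A B' A, h1']
  have hAB : A * B = A * B' := by
    calc A * B = (A*B)ᵀ := h3.symm
    _ = ((A*B')*(A*B))ᵀ := by rw [← key]
    _ = (A*B)ᵀ*(A*B')ᵀ := Matrix.transpose_mul _ _
    _ = (A*B)*(A*B') := by rw [h3, h3']
    _ = (A*B*A)*B' := (Matrix.mul_assoc (A*B) A B').symm
    _ = A * B' := by rw [h1]
  have hBA : B * A = B' * A := by
    calc B * A = (B*A)ᵀ := h4.symm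
    _ = ((B*A)*(B'*A))ᵀ := by rw [← keyBA]
    _ = (B'*A)ᵀ*(B*A)ᵀ := Matrix.transpose_mul _ _
    _ = (B'*A)*(B*A) := by rw [h4, h4']
    _ = B'*(A*B*A) := by rw [Matrix.mul_assoc B' A (B*A), ← Matrix.mul_assoc A B A]
    _ = B' * A := by rw [h1]
  calc B = B * A * B := h2.symm
  _ = B'*A*B := by rw [hBA]
  _ = B'*(A*B') := by rw [Matrix.mul_assoc, hAB]
  _ = B' := by rw [← Matrix.mul_assoc, h2']

lemma trace_sum_eig {n : ℕ} {P : Matrix (Fin n) (Fin n) ℝ} (hP : P.IsHermitian) :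
    P.trace = ∑ i, hP.eigenvalues i := by
  conv_lhs => rw [hP.spectral_theorem, Unitary.conjStarAlgAut_apply]
  rw [Matrix.trace_mul_comm, ← Matrix.mul_assoc]
  rw [Unitary.coe_star_mul_self, Matrix.one_mul, Matrix.trace_diagonal]
  simp [Function.comp]

lemma eig_idem {n : ℕ} {P : Matrix (Fin n) (Fin n) ℝ} (hP : P.IsHermitian)
    (hidem : P * P = P) (i : Fin n) :
    hP.eigenvalues i = 0 ∨ hP.eigenvalues i = 1 := by
  have h := hP.mulVec_eigenvectorBasis i
  have h2 : (P*P) *ᵥ ⇑(hP.eigenvectorBasis i)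
      = (hP.eigenvalues i * hP.eigenvalues i) • ⇑(hP.eigenvectorBasis i) := by
    rw [← Matrix.mulVec_mulVec, h, Matrix.mulVec_smul, h, smul_smul]
  rw [hidem, h] at h2
  have hne : ⇑(hP.eigenvectorBasis i) ≠ 0 := by
    have hnz := hP.eigenvectorBasis.orthonormal.ne_zero i
    intro hc
    apply hnz
    ext j
    exact congrFun hc j
  have hz : (hP.eigenvalues i * hP.eigenvalues i - hP.eigenvalues i)
      • ⇑(hP.eigenvectorBasis i) = 0 := by
    rw [sub_smul, ← h2, sub_self]
  rcases smul_eq_zero.mp hz with hμ | hu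
  · have : hP.eigenvalues i * (hP.eigenvalues i - 1) = 0 := by ring_nf; ring_nf at hμ; linarith
    rcases mul_eq_zero.mp this with h' | h'
    · exact Or.inl h'
    · exact Or.inr (by linarith)
  · exact absurd hu hne

lemma trace_idem_eq_rank {n : ℕ} {P : Matrix (Fin n) (Fin n) ℝ} (hP : P.IsHermitian)
    (hidem : P * P = P) : P.trace = (P.rank : ℝ) := by
  rw [trace_sum_eig hP, hP.rank_eq_card_non_zero_eigs, Fintype.card_subtype,
    Finset.card_filter]
  push_cast
  apply Finset.sum_congr rfl
  intro i _
  rcases eig_idem hP hidem i with h | h <;> simp [h]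

lemma trace_tmul {n : ℕ} (X Y : Matrix (Fin n) (Fin n) ℝ) :
    (Xᵀ * Y).trace = ∑ p : Fin n × Fin n, X p.1 p.2 * Y p.1 p.2 := by
  rw [Fintype.sum_prod_type, Matrix.trace]
  simp only [Matrix.diag, Matrix.mul_apply, Matrix.transpose_apply]
  exact Finset.sum_comm

/-- For a connected block design with intrablock matrix `C = R − (1/k) N Nᵀ`,
`tr(C) = bk − (1/k) ∑ n_{ij}² ≤ b(k−1)` and hence `tr(C⁺) ≥ (v−1)²/(b(k−1))`. -/
theorem stmt_4 (v b k : ℕ) (hv : 0 < v) (hb : 0 < b) (hk : 0 < k)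
    (N : Fin v → Fin b → ℕ) (hcol : ∀ j, ∑ i, N i j = k)
    (r : Fin v → ℕ) (hrdef : ∀ i, r i = ∑ j, N i j) (hr : ∀ i, 0 < r i)
    (M : Matrix (Fin v) (Fin b) ℝ) (hM : ∀ i j, M i j = (N i j : ℝ))
    (C Cp : Matrix (Fin v) (Fin v) ℝ)
    (hC : C = Matrix.diagonal (fun i => (r i : ℝ)) - (k : ℝ)⁻¹ • (M * Mᵀ))
    (hpsd : C.PosSemidef) (hrank : C.rank = v - 1)
    (hmp : IsMoorePenrose C Cp) :
    C.trace = (b : ℝ) * k - (k : ℝ)⁻¹ * ∑ i, ∑ j, (N i j : ℝ) ^ 2 ∧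
    C.trace ≤ (b : ℝ) * ((k : ℝ) - 1) ∧
    Cp.trace ≥ ((v : ℝ) - 1) ^ 2 / ((b : ℝ) * ((k : ℝ) - 1)) := by
  have hkpos : (0:ℝ) < (k:ℝ) := by exact_mod_cast hk
  -- trace formula
  have hsumr : (∑ i, (r i : ℝ)) = (b:ℝ)*(k:ℝ) := by
    have hnat : ∑ i, r i = b * k := by
      calc ∑ i, r i = ∑ i, ∑ j, N i j := by simp [hrdef]
      _ = ∑ j : Fin b, ∑ i, N i j := Finset.sum_comm
      _ = ∑ _j : Fin b, k := by simp [hcol]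
      _ = b * k := by simp [Finset.sum_const, mul_comm]
    exact_mod_cast hnat
  have part1 : C.trace = (b : ℝ) * k - (k : ℝ)⁻¹ * ∑ i, ∑ j, (N i j : ℝ) ^ 2 := by
    rw [hC, Matrix.trace_sub, Matrix.trace_smul, Matrix.trace_diagonal, hsumr, smul_eq_mul]
    congr 1
    congr 1
    rw [Matrix.trace]
    simp only [Matrix.diag, Matrix.mul_apply, Matrix.transpose_apply, hM]
    exact Finset.sum_congr rfl fun i _ => Finset.sum_congr rfl fun j _ => (sq _).symm
  have hsq : (b:ℝ)*(k:ℝ) ≤ ∑ i, ∑ j, (N i j:ℝ)^2 := by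
    have hnat : b*k ≤ ∑ i, ∑ j, (N i j)^2 := by
      calc b*k = ∑ _j : Fin b, k := by simp [Finset.sum_const, mul_comm]
      _ = ∑ j : Fin b, ∑ i, N i j := by simp [hcol]
      _ = ∑ i, ∑ j, N i j := Finset.sum_comm
      _ ≤ ∑ i, ∑ j, (N i j)^2 :=
        Finset.sum_le_sum fun i _ => Finset.sum_le_sum fun j _ =>
          Nat.le_self_pow (by norm_num) _
    exact_mod_cast hnat
  have part2 : C.trace ≤ (b : ℝ) * ((k : ℝ) - 1) := by
    rw [part1]
    have hbk : (b:ℝ) ≤ (k:ℝ)⁻¹ * ∑ i, ∑ j, (N i j:ℝ)^2 := by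
      rw [inv_mul_eq_div, le_div_iff₀ hkpos]
      linarith
    nlinarith
  refine ⟨part1, part2, ?_⟩
  -- symmetry facts
  have hsymC : Cᵀ = C := by have h0 : Cᴴ = C := hpsd.1; rwa [ctr_eq] at h0
  obtain ⟨h1, h2, h3, h4⟩ := hmp
  have hsymCp : Cpᵀ = Cp := by
    refine mp_unique ⟨?_, ?_, ?_, ?_⟩ ⟨h1, h2, h3, h4⟩
    · have := congrArg Matrix.transpose h1
      rw [Matrix.transpose_mul, Matrix.transpose_mul, hsymC] at this
      rw [Matrix.mul_assoc]
      exact this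
    · have := congrArg Matrix.transpose h2
      rw [Matrix.transpose_mul, Matrix.transpose_mul, hsymC] at this
      rw [Matrix.mul_assoc]
      exact this
    · have e : C * Cpᵀ = Cp * C := by
        conv_lhs => rw [← hsymC]
        rw [← Matrix.transpose_mul, h4]
      rw [e, h4]
    · have e : Cpᵀ * C = C * Cp := by
        conv_lhs => rw [← hsymC]
        rw [← Matrix.transpose_mul, h3]
      rw [e, h3]
  -- P = C * Cp is a symmetric idempotent with trace = rank C = v - 1
  have hPherm : (C*Cp).IsHermitian := by
    show (C*Cp)ᴴ = C*Cp
    rw [ctr_eq]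
    exact h3
  have hPidem : (C*Cp)*(C*Cp) = C*Cp := by
    rw [← Matrix.mul_assoc, h1]
  have hrankP : (C*Cp).rank = C.rank := by
    refine le_antisymm (Matrix.rank_mul_le_left C Cp) ?_
    calc C.rank = ((C*Cp)*C).rank := by rw [h1]
    _ ≤ (C*Cp).rank := Matrix.rank_mul_le_left _ _
  have htrP : (C*Cp).trace = ((v:ℝ) - 1) := by
    rw [trace_idem_eq_rank hPherm hPidem, hrankP, hrank]
    have : (1:ℕ) ≤ v := hv
    push_cast [Nat.cast_sub this]
    ring
  -- square root of C
  open scoped MatrixOrder in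
  set S := CFC.sqrt C with hSdef
  have hS : S * S = C := CFC.sqrt_mul_sqrt_self C hpsd.nonneg
  have hSsym : Sᵀ = S := by
    have h0 : Sᴴ = S := (CFC.sqrt_nonneg C).isSelfAdjoint
    rwa [ctr_eq] at h0
  have hXY : (Sᵀ * (S*Cp)).trace = ((v:ℝ) - 1) := by
    rw [hSsym, ← Matrix.mul_assoc, hS]; exact htrP
  have hXX : (Sᵀ * S).trace = C.trace := by rw [hSsym, hS]
  have hYY : ((S*Cp)ᵀ * (S*Cp)).trace = Cp.trace := by
    rw [Matrix.transpose_mul, hSsym, hsymCp, Matrix.mul_assoc Cp S (S*Cp),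
      ← Matrix.mul_assoc S S Cp, hS, ← Matrix.mul_assoc, h2]
  -- Cauchy-Schwarz
  have hcs := Finset.sum_mul_sq_le_sq_mul_sq Finset.univ
    (fun p : Fin v × Fin v => S p.1 p.2) (fun p : Fin v × Fin v => (S*Cp) p.1 p.2)
  rw [show ∑ p : Fin v × Fin v, S p.1 p.2 * (S*Cp) p.1 p.2 = (Sᵀ * (S*Cp)).trace from
      (trace_tmul S (S*Cp)).symm] at hcs
  have e3 : ∑ p : Fin v × Fin v, S p.1 p.2 ^ 2 = (Sᵀ * S).trace := by
    rw [trace_tmul]; exact Finset.sum_congr rfl fun p _ => sq _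
  have e4 : ∑ p : Fin v × Fin v, (S*Cp) p.1 p.2 ^ 2 = ((S*Cp)ᵀ * (S*Cp)).trace := by
    rw [trace_tmul]; exact Finset.sum_congr rfl fun p _ => sq _
  have hCpnn : 0 ≤ Cp.trace := by
    rw [← hYY, ← e4]
    exact Finset.sum_nonneg fun p _ => sq_nonneg _
  rw [e3, e4, hXY, hXX, hYY] at hcs
  -- conclude
  by_cases hL : 0 < (b : ℝ) * ((k : ℝ) - 1)
  · rw [ge_iff_le, div_le_iff₀ hL]
    have := mul_le_mul_of_nonneg_right part2 hCpnn
    nlinarith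
  · have hL0 : (b : ℝ) * ((k : ℝ) - 1) = 0 := by
      have hk1 : (1:ℝ) ≤ (k:ℝ) := by exact_mod_cast hk
      have hb0 : (0:ℝ) ≤ (b:ℝ) := by positivity
      nlinarith
    rw [hL0, div_zero]
    exact hCpnn
end

section
/- With C̃^+ as above satisfying C̃^+ ⪰ (1/k)(I_b − b^{−1} 1_b 1_bᵀ), and N a v×b nonnegative integer matrix with column sums k and positive row sums r_i (R = diag(r_i)), one has tr(R^{−1} N C̃^+ Nᵀ R^{−1}) ≥ (1/k) ∑_{i=1}^v 1/r_i − v/(bk). -/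
open BigOperators Matrix

lemma psd_trace_nonneg {n : ℕ} {P : Matrix (Fin n) (Fin n) ℝ}
    (hP : P.PosSemidef) : 0 ≤ P.trace := by
  rw [Matrix.trace]
  apply Finset.sum_nonneg
  intro i _
  exact hP.diag_nonneg

/-- With `C̃⁺ ⪰ (1/k)(I_b − b⁻¹ 1 1ᵀ)` and `N` a nonnegative integer matrix with
column sums `k` and positive row sums `r_i`,
`tr(R⁻¹ N C̃⁺ Nᵀ R⁻¹) ≥ (1/k) ∑ 1/r_i − v/(bk)`. -/
theorem stmt_8 (v b k : ℕ) (hv : 0 < v) (hb : 0 < b) (hk : 0 < k)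
    (N : Fin v → Fin b → ℕ) (hcol : ∀ j, ∑ i, N i j = k)
    (r : Fin v → ℕ) (hrdef : ∀ i, r i = ∑ j, N i j) (hr : ∀ i, 0 < r i)
    (M : Matrix (Fin v) (Fin b) ℝ) (hM : ∀ i j, M i j = (N i j : ℝ))
    (Rinv : Matrix (Fin v) (Fin v) ℝ)
    (hRinv : Rinv = Matrix.diagonal fun i => ((r i : ℝ))⁻¹)
    (Ctp : Matrix (Fin b) (Fin b) ℝ)
    (hdom : (Ctp - (k : ℝ)⁻¹ • ((1 : Matrix (Fin b) (Fin b) ℝ) -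
      (b : ℝ)⁻¹ • Matrix.of (fun _ _ => (1 : ℝ)))).PosSemidef) :
    (Rinv * M * Ctp * Mᵀ * Rinv).trace ≥
      (k : ℝ)⁻¹ * ∑ i, ((r i : ℝ))⁻¹ - (v : ℝ) / ((b : ℝ) * k) := by
  have hrne : ∀ i, ((r i : ℝ)) ≠ 0 := fun i => Nat.cast_ne_zero.mpr (hr i).ne'
  set J : Matrix (Fin b) (Fin b) ℝ := Matrix.of (fun _ _ => (1 : ℝ)) with hJ
  set D : Matrix (Fin b) (Fin b) ℝ :=
    (k : ℝ)⁻¹ • ((1 : Matrix (Fin b) (Fin b) ℝ) - (b : ℝ)⁻¹ • J) with hD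
  set A : Matrix (Fin v) (Fin b) ℝ := Rinv * M with hAdef
  have hA : ∀ i j, A i j = (r i : ℝ)⁻¹ * N i j := by
    intro i j
    simp [hAdef, hRinv, hM, Matrix.diagonal_mul]
  have hRs : Rinvᵀ = Rinv := by simp [hRinv]
  have hform : Rinv * M * Ctp * Mᵀ * Rinv = A * Ctp * Aᵀ := by
    simp [hAdef, Matrix.transpose_mul, hRs, Matrix.mul_assoc]
  have hrowsum : ∀ i, ∑ j, A i j = 1 := by
    intro i
    have hs : ∑ j, (N i j : ℝ) = (r i : ℝ) := by
      rw [hrdef i]; push_cast; ring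
    simp only [hA, ← Finset.mul_sum, hs]
    exact inv_mul_cancel₀ (hrne i)
  -- trace of A * J * Aᵀ equals v
  have htrJ : (A * J * Aᵀ).trace = (v : ℝ) := by
    have hdiag : ∀ i, (A * J * Aᵀ) i i = 1 := by
      intro i
      have hAJ : ∀ l, (A * J) i l = 1 := by
        intro l
        simp [Matrix.mul_apply, hJ, hrowsum i]
      calc (A * J * Aᵀ) i i = ∑ l, (A * J) i l * A i l := by
            simp [Matrix.mul_apply, Matrix.transpose_apply]
        _ = ∑ l, A i l := by simp [hAJ]
        _ = 1 := hrowsum i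
    simp [Matrix.trace, Matrix.diag, hdiag]
  -- trace of A * Aᵀ at least ∑ 1/r_i
  have htrAA : ∑ i, ((r i : ℝ))⁻¹ ≤ (A * Aᵀ).trace := by
    have hform2 : (A * Aᵀ).trace = ∑ i, ∑ j, A i j * A i j := by
      simp [Matrix.trace, Matrix.diag, Matrix.mul_apply]
    rw [hform2]
    apply Finset.sum_le_sum
    intro i _
    have hsq : (r i : ℝ) ≤ ∑ j, (N i j : ℝ) * (N i j : ℝ) := by
      have hnat : r i ≤ ∑ j, N i j * N i j := by
        rw [hrdef i]
        apply Finset.sum_le_sum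
        intro j _
        nlinarith [Nat.zero_le (N i j)]
      calc (r i : ℝ) ≤ ((∑ j, N i j * N i j : ℕ) : ℝ) := by exact_mod_cast hnat
        _ = ∑ j, (N i j : ℝ) * (N i j : ℝ) := by push_cast; ring
    have hexp : ∑ j, A i j * A i j
        = (r i : ℝ)⁻¹ * (r i : ℝ)⁻¹ * ∑ j, (N i j : ℝ) * (N i j : ℝ) := by
      rw [Finset.mul_sum]
      exact Finset.sum_congr rfl fun j _ => by rw [hA]; ring
    rw [hexp]
    have h2 : (r i : ℝ)⁻¹ * (r i : ℝ)⁻¹ * (r i : ℝ) ≤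
        (r i : ℝ)⁻¹ * (r i : ℝ)⁻¹ * ∑ j, (N i j : ℝ) * (N i j : ℝ) := by
      apply mul_le_mul_of_nonneg_left hsq
      positivity
    calc ((r i : ℝ))⁻¹ = (r i : ℝ)⁻¹ * (r i : ℝ)⁻¹ * (r i : ℝ) := by
          field_simp
      _ ≤ _ := h2
  -- split Ctp
  have hsplit : A * Ctp * Aᵀ = A * D * Aᵀ + A * (Ctp - D) * Aᵀ := by
    rw [Matrix.mul_sub, Matrix.sub_mul]
    abel
  have hpsd : 0 ≤ (A * (Ctp - D) * Aᵀ).trace := by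
    have hct : Aᴴ = Aᵀ := by ext i j; simp [Matrix.conjTranspose_apply]
    have := hdom.mul_mul_conjTranspose_same A
    rw [hct] at this
    exact psd_trace_nonneg this
  -- trace of A * D * Aᵀ
  have htrD : (A * D * Aᵀ).trace
      = (k : ℝ)⁻¹ * ((A * Aᵀ).trace - (b : ℝ)⁻¹ * (v : ℝ)) := by
    have : A * D * Aᵀ = (k : ℝ)⁻¹ • (A * Aᵀ - (b : ℝ)⁻¹ • (A * J * Aᵀ)) := by
      rw [hD]
      rw [Matrix.mul_smul, Matrix.smul_mul, Matrix.mul_sub, Matrix.mul_one,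
        Matrix.sub_mul, Matrix.mul_smul, Matrix.smul_mul]
    rw [this, Matrix.trace_smul, Matrix.trace_sub, Matrix.trace_smul, htrJ]
    simp [smul_eq_mul]
  rw [hform, hsplit, Matrix.trace_add, htrD]
  have hk0 : (0 : ℝ) ≤ (k : ℝ)⁻¹ := by positivity
  have hmul := mul_le_mul_of_nonneg_left htrAA hk0
  have hdiv : (v : ℝ) / ((b : ℝ) * k) = (k : ℝ)⁻¹ * ((b : ℝ)⁻¹ * v) := by
    rw [div_eq_mul_inv, mul_inv]; ring
  rw [ge_iff_le, hdiv]
  nlinarith [hmul, hpsd]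
end

section
/- For any connected block design d in D(b,v,k), the control-versus-test A-criterion A_{ct} = 1 + (1/v)∑_i 1/r_i + (1/b)tr(C̃^+) + (1/v)tr(R^{−1} N C̃^+ Nᵀ R^{−1}) satisfies A_{ct} ≥ 1 + ((k+1)/(vk))·H + (1/b)·L̃ − 1/(bk), where H = h/(f+1) + (v−h)/f with f = ⌊bk/v⌋, h = bk − vf, and L̃ = (b−1)^2/(bk−v). -/
open BigOperators Matrix

lemma mp_unique_s9 {n : ℕ} {A X Y : Matrix (Fin n) (Fin n) ℝ}
    (hX : IsMoorePenrose A X) (hY : IsMoorePenrose A Y) : X = Y := by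
  obtain ⟨hx1, hx2, hx3, hx4⟩ := hX
  obtain ⟨hy1, hy2, hy3, hy4⟩ := hY
  have hA : Aᵀ = Aᵀ * Yᵀ * Aᵀ := by
    conv_lhs => rw [← hy1]
    simp [Matrix.transpose_mul, mul_assoc]
  have hAX : A * X = A * Y := by
    calc A * X = (A * X)ᵀ := hx3.symm
    _ = Xᵀ * Aᵀ := by simp [Matrix.transpose_mul]
    _ = Xᵀ * (Aᵀ * Yᵀ * Aᵀ) := by rw [← hA]
    _ = (Xᵀ * Aᵀ) * (Yᵀ * Aᵀ) := by simp [mul_assoc]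
    _ = (A * X)ᵀ * (A * Y)ᵀ := by simp [Matrix.transpose_mul]
    _ = (A * X) * (A * Y) := by rw [hx3, hy3]
    _ = (A * X * A) * Y := by simp [mul_assoc]
    _ = A * Y := by rw [hx1]
  have hXA : X * A = Y * A := by
    calc X * A = (X * A)ᵀ := hx4.symm
    _ = Aᵀ * Xᵀ := by simp [Matrix.transpose_mul]
    _ = (Aᵀ * Yᵀ * Aᵀ) * Xᵀ := by rw [← hA]
    _ = (Aᵀ * Yᵀ) * (Aᵀ * Xᵀ) := by simp [mul_assoc]
    _ = (Y * A)ᵀ * (X * A)ᵀ := by simp [Matrix.transpose_mul]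
    _ = (Y * A) * (X * A) := by rw [hx4, hy4]
    _ = Y * (A * X * A) := by simp [mul_assoc]
    _ = Y * A := by rw [hx1]
  calc X = X * A * X := hx2.symm ▸ rfl
  _ = X * A * Y := by rw [mul_assoc, hAX, ← mul_assoc, hXA, mul_assoc, ← hy1, mul_assoc, mul_assoc]
  _ = Y * A * Y := by rw [hXA]
  _ = Y := hy2

lemma psd_trace_nonneg_s9 {n : ℕ} {A : Matrix (Fin n) (Fin n) ℝ} (hA : A.PosSemidef) :
    0 ≤ A.trace := by
  rw [Matrix.trace]
  refine Finset.sum_nonneg fun i _ => ?_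
  exact hA.diag_nonneg

lemma trace_mul_nonneg {n : ℕ} {A B : Matrix (Fin n) (Fin n) ℝ}
    (hA : A.PosSemidef) (hB : B.PosSemidef) : 0 ≤ (A * B).trace := by
  obtain ⟨S, hSpsd, hSS⟩ : ∃ S : Matrix (Fin n) (Fin n) ℝ, S.PosSemidef ∧ S * S = A :=
    open scoped MatrixOrder in ⟨CFC.sqrt A, (CFC.sqrt_nonneg A).posSemidef, CFC.sqrt_mul_sqrt_self A hA.nonneg⟩
  have hSH : Sᴴ = S := hSpsd.1.eq
  rw [← hSS, (Matrix.trace_mul_cycle S B S).symm]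
  have hpsd : (Sᴴ * B * S).PosSemidef := hB.conjTranspose_mul_mul_same S
  rw [hSH] at hpsd
  exact psd_trace_nonneg_s9 hpsd

lemma inv_ge_line (f m : ℕ) (hf : 1 ≤ f) (hm : 1 ≤ m) :
    1/(f:ℝ) - ((m:ℝ) - f)/((f:ℝ)*((f:ℝ)+1)) ≤ ((m:ℝ))⁻¹ := by
  have hf0 : (0:ℝ) < f := by exact_mod_cast hf
  have hm0 : (0:ℝ) < m := by exact_mod_cast hm
  have key : 0 ≤ ((m:ℝ) - f) * ((m:ℝ) - f - 1) := by
    rcases le_or_gt m f with h | h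
    · have h' : (m:ℝ) ≤ f := by exact_mod_cast h
      nlinarith
    · have h' : (f:ℝ) + 1 ≤ m := by exact_mod_cast h
      nlinarith
  rw [inv_eq_one_div, div_sub_div _ _ (ne_of_gt hf0) (by positivity),
    div_le_div_iff₀ (by positivity) hm0]
  nlinarith [mul_nonneg (le_of_lt hf0) key]

set_option maxHeartbeats 1600000 in
/-- Theorem 1(c): for any connected block design in `D(b,v,k)`, the criterion
`A_ct = 1 + (1/v)∑ 1/r_i + (1/b)tr(C̃⁺) + (1/v)tr(R⁻¹NC̃⁺NᵀR⁻¹)` satisfies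
`A_ct ≥ 1 + ((k+1)/(vk))·H + (1/b)·L̃ − 1/(bk)`, where `H = h/(f+1) + (v−h)/f`,
`f = ⌊bk/v⌋`, `h = bk − vf`, `L̃ = (b−1)²/(bk−v)`. -/
theorem stmt_9 (v b k : ℕ) (hv : 0 < v) (hb : 0 < b) (hk : 0 < k) (hvbk : v < b * k)
    (N : Fin v → Fin b → ℕ) (hcol : ∀ j, ∑ i, N i j = k)
    (r : Fin v → ℕ) (hrdef : ∀ i, r i = ∑ j, N i j) (hr : ∀ i, 0 < r i)
    (hsum : ∑ i, r i = b * k)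
    (M : Matrix (Fin v) (Fin b) ℝ) (hM : ∀ i j, M i j = (N i j : ℝ))
    (Rinv : Matrix (Fin v) (Fin v) ℝ)
    (hRinv : Rinv = Matrix.diagonal fun i => ((r i : ℝ))⁻¹)
    (Ct Ctp : Matrix (Fin b) (Fin b) ℝ)
    (hCt : Ct = (k : ℝ) • (1 : Matrix (Fin b) (Fin b) ℝ) - Mᵀ * Rinv * M)
    (hpsd : Ct.PosSemidef) (hrank : Ct.rank = b - 1)
    (hmp : IsMoorePenrose Ct Ctp) :
    1 + (v : ℝ)⁻¹ * ∑ i, ((r i : ℝ))⁻¹ + (b : ℝ)⁻¹ * Ctp.trace +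
        (v : ℝ)⁻¹ * (Rinv * M * Ctp * Mᵀ * Rinv).trace ≥
      1 + (((k : ℝ) + 1) / ((v : ℝ) * k)) *
          (((b * k - v * ((b * k) / v) : ℕ) : ℝ) / ((((b * k) / v : ℕ) : ℝ) + 1) +
            ((v : ℝ) - ((b * k - v * ((b * k) / v) : ℕ) : ℝ)) / (((b * k) / v : ℕ) : ℝ)) +
        (b : ℝ)⁻¹ * (((b : ℝ) - 1) ^ 2 / ((b : ℝ) * k - v)) - 1 / ((b : ℝ) * k) := by
  classical
  have hv0 : (0:ℝ) < v := by exact_mod_cast hv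
  have hb0 : (0:ℝ) < b := by exact_mod_cast hb
  have hk0 : (0:ℝ) < k := by exact_mod_cast hk
  have hvbk' : (v:ℝ) < (b:ℝ) * k := by exact_mod_cast hvbk
  have hr0 : ∀ i, (0:ℝ) < r i := fun i => by exact_mod_cast hr i
  -- row and column sums of M
  have hMrow : ∀ i, ∑ j, M i j = (r i : ℝ) := by
    intro i
    simp only [hM, hrdef i]
    push_cast
    rfl
  have hMcol : ∀ j, ∑ i, M i j = (k : ℝ) := by
    intro j
    simp only [hM, ← hcol j]
    push_cast
    rfl
  -- entries of the concurrence part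
  have hentry : ∀ j l, (Mᵀ * Rinv * M) j l = ∑ i, M i j * ((r i:ℝ))⁻¹ * M i l := by
    intro j l
    rw [hRinv, Matrix.mul_apply]
    refine Finset.sum_congr rfl fun i _ => ?_
    rw [Matrix.mul_diagonal, Matrix.transpose_apply]
  -- row sums of Ct vanish
  have hrowCt : ∀ j, ∑ l, Ct j l = 0 := by
    intro j
    have h1 : ∑ l, ((k:ℝ) • (1 : Matrix (Fin b) (Fin b) ℝ)) j l = (k:ℝ) := by
      simp [Matrix.one_apply]
    have h2 : ∑ l, (Mᵀ * Rinv * M) j l = (k:ℝ) := by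
      simp only [hentry]
      rw [Finset.sum_comm]
      have h3 : ∀ i, ∑ l, M i j * ((r i:ℝ))⁻¹ * M i l = M i j := by
        intro i
        rw [← Finset.mul_sum, hMrow, mul_assoc, inv_mul_cancel₀ (ne_of_gt (hr0 i)), mul_one]
      rw [Finset.sum_congr rfl fun i _ => h3 i, hMcol]
    rw [hCt]
    simp only [Matrix.sub_apply]
    rw [Finset.sum_sub_distrib, h1, h2, sub_self]
  -- spectral setup
  have hherm : Ct.IsHermitian := hpsd.1
  set U : Matrix (Fin b) (Fin b) ℝ := (hherm.eigenvectorUnitary : Matrix (Fin b) (Fin b) ℝ)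
    with hUdef
  set d : Fin b → ℝ := hherm.eigenvalues with hddef
  have hUU : star U * U = 1 := Matrix.mem_unitaryGroup_iff'.mp hherm.eigenvectorUnitary.2
  have hUU' : U * star U = 1 := Matrix.mem_unitaryGroup_iff.mp hherm.eigenvectorUnitary.2
  have hofReal : (RCLike.ofReal ∘ d : Fin b → ℝ) = d := by
    funext i; simp
  have hspec : Ct = U * diagonal d * star U := by
    conv_lhs => rw [hherm.spectral_theorem]
    rw [hofReal]
    rfl
  have mulE : ∀ e e' : Fin b → ℝ, (U * diagonal e * star U) * (U * diagonal e' * star U)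
      = U * diagonal (fun i => e i * e' i) * star U := by
    intro e e'
    calc (U * diagonal e * star U) * (U * diagonal e' * star U)
        = U * (diagonal e * ((star U * U) * (diagonal e' * star U))) := by
          simp only [mul_assoc]
      _ = U * (diagonal e * diagonal e') * star U := by
          rw [hUU, one_mul]; simp only [mul_assoc]
      _ = U * diagonal (fun i => e i * e' i) * star U := by
          rw [Matrix.diagonal_mul_diagonal]
  have hsU : star U = Uᵀ := by
    rw [Matrix.star_eq_conjTranspose, Matrix.conjTranspose_eq_transpose_of_trivial]
  have transE : ∀ e : Fin b → ℝ, (U * diagonal e * star U)ᵀ = U * diagonal e * star U := by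
    intro e
    rw [hsU]
    simp [Matrix.transpose_mul, Matrix.diagonal_transpose, mul_assoc]
  have traceE : ∀ e : Fin b → ℝ, (U * diagonal e * star U).trace = ∑ i, e i := by
    intro e
    rw [Matrix.trace_mul_cycle U (diagonal e) (star U), hUU, one_mul,
      Matrix.trace_diagonal]
  -- the pseudo-inverse
  set G : Matrix (Fin b) (Fin b) ℝ := U * diagonal (fun i => (d i)⁻¹) * star U with hG
  set Pm : Matrix (Fin b) (Fin b) ℝ := U * diagonal (fun i => if d i = 0 then 0 else 1) * star U
    with hPm
  have e1 : (fun i => d i * (d i)⁻¹ * d i) = d := by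
    funext i
    rcases eq_or_ne (d i) 0 with h | h
    · simp [h]
    · field_simp
  have e2 : (fun i => (d i)⁻¹ * d i * (d i)⁻¹) = fun i => (d i)⁻¹ := by
    funext i
    rcases eq_or_ne (d i) 0 with h | h
    · simp [h]
    · field_simp
  have hmpG : IsMoorePenrose Ct G := by
    refine ⟨?_, ?_, ?_, ?_⟩
    · rw [hspec, hG]
      simp only [mulE]
      rw [e1]
    · rw [hspec, hG]
      simp only [mulE]
      rw [e2]
    · rw [hspec, hG]
      simp only [mulE]
      exact transE _
    · rw [hspec, hG]
      simp only [mulE]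
      exact transE _
  have hCtpG : Ctp = G := mp_unique_s9 hmp hmpG
  -- traces
  have htrCtp : Ctp.trace = ∑ i, (d i)⁻¹ := by rw [hCtpG, hG]; exact traceE _
  have htrCt : Ct.trace = ∑ i, d i := by rw [hspec]; exact traceE _
  -- eigenvalue bounds
  have hd0 : ∀ i, 0 ≤ d i := fun i => hpsd.eigenvalues_nonneg i
  have hMRM : (Mᵀ * Rinv * M).PosSemidef := by
    set S : Matrix (Fin v) (Fin v) ℝ := diagonal (fun i => Real.sqrt ((r i:ℝ))⁻¹) with hS
    have hST : Sᵀ = S := by rw [hS, Matrix.diagonal_transpose]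
    have hSS : S * S = Rinv := by
      rw [hS, Matrix.diagonal_mul_diagonal, hRinv]
      exact congrArg _ (funext fun i => Real.mul_self_sqrt (inv_nonneg.mpr (le_of_lt (hr0 i))))
    have h1 : Mᵀ * Rinv * M = (S * M)ᴴ * (S * M) := by
      rw [Matrix.conjTranspose_eq_transpose_of_trivial, Matrix.transpose_mul, hST, ← hSS]
      simp only [Matrix.mul_assoc]
    rw [h1]
    exact Matrix.posSemidef_conjTranspose_mul_self _
  have hsub1 : (k:ℝ) • (1 : Matrix (Fin b) (Fin b) ℝ) - Ct = Mᵀ * Rinv * M := by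
    rw [hCt, sub_sub_cancel]
  have hdk : ∀ i, d i ≤ k := by
    have hpsd2 : ((k:ℝ) • (1:Matrix (Fin b) (Fin b) ℝ) - Ct).PosSemidef := by
      rw [hsub1]; exact hMRM
    have hcong := hpsd2.conjTranspose_mul_mul_same U
    have hdiagU : Uᴴ * ((k:ℝ) • (1:Matrix (Fin b) (Fin b) ℝ) - Ct) * U
        = diagonal (fun i => (k:ℝ) - d i) := by
      rw [Matrix.conjTranspose_eq_transpose_of_trivial, ← hsU, Matrix.mul_sub, Matrix.sub_mul]
      have ha : star U * ((k:ℝ) • (1:Matrix (Fin b) (Fin b) ℝ)) * U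
          = (k:ℝ) • (1:Matrix (Fin b) (Fin b) ℝ) := by
        rw [Matrix.mul_smul, Matrix.mul_one, Matrix.smul_mul, hUU]
      have hb' : star U * Ct * U = diagonal d := by
        rw [hspec]
        simp only [Matrix.mul_assoc]
        rw [hUU, Matrix.mul_one, ← Matrix.mul_assoc (star U) U, hUU, Matrix.one_mul]
      rw [ha, hb']
      ext i j
      by_cases h : i = j <;> simp [Matrix.diagonal, Matrix.one_apply, h]
    rw [hdiagU] at hcong
    intro i
    have h2 := (Matrix.posSemidef_diagonal_iff.mp hcong) i
    linarith
  -- eigenvalue count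
  have hcard : (Finset.univ.filter fun i => d i ≠ 0).card = b - 1 := by
    have h1 := hherm.rank_eq_card_non_zero_eigs
    rw [hrank, Fintype.card_subtype] at h1
    exact h1.symm
  have htrPm : Pm.trace = (b:ℝ) - 1 := by
    rw [hPm, traceE]
    have h1 : ∑ i, (if d i = 0 then (0:ℝ) else 1)
        = ((Finset.univ.filter fun i => d i ≠ 0).card : ℝ) := by
      rw [Finset.card_filter]
      push_cast
      refine Finset.sum_congr rfl fun i _ => ?_
      by_cases h : d i = 0 <;> simp [h]
    rw [h1, hcard]
    simp [Nat.cast_sub hb]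
  -- Pm equals the centering projection Q
  set J : Matrix (Fin b) (Fin b) ℝ := Matrix.of (fun _ _ => (1:ℝ)) with hJ
  set Q : Matrix (Fin b) (Fin b) ℝ := 1 - (b:ℝ)⁻¹ • J with hQ
  have hJT : Jᵀ = J := by
    ext i j; rfl
  have hJJ : J * J = (b:ℝ) • J := by
    ext i j
    simp [hJ, Matrix.mul_apply, Finset.card_univ, mul_comm]
  have hind2 : (fun i => (if d i = 0 then (0:ℝ) else 1) * (if d i = 0 then (0:ℝ) else 1))
      = fun i => if d i = 0 then (0:ℝ) else 1 := by
    funext i; by_cases h : d i = 0 <;> simp [h]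
  have hPmPm : Pm * Pm = Pm := by
    rw [hPm]; simp only [mulE]; rw [hind2]
  have hPmT : Pmᵀ = Pm := by rw [hPm]; exact transE _
  have e3 : (fun i => (d i)⁻¹ * d i) = fun i => if d i = 0 then (0:ℝ) else 1 := by
    funext i
    rcases eq_or_ne (d i) 0 with h | h
    · simp [h]
    · simp [h, inv_mul_cancel₀ h]
  have hPmCt : Ctp * Ct = Pm := by
    rw [hCtpG, hG, hspec, hPm]
    simp only [mulE]
    rw [e3]
  have hCt1 : Ct *ᵥ (fun _ => (1:ℝ)) = 0 := by
    funext j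
    simp only [Matrix.mulVec, dotProduct, mul_one, Pi.zero_apply]
    exact hrowCt j
  have hPm1 : Pm *ᵥ (fun _ => (1:ℝ)) = 0 := by
    rw [← hPmCt, ← Matrix.mulVec_mulVec, hCt1, Matrix.mulVec_zero]
  have hPmJ : Pm * J = 0 := by
    ext i j
    have h2 := congrFun hPm1 i
    simp only [Matrix.mulVec, dotProduct, mul_one, Pi.zero_apply] at h2
    simp [hJ, Matrix.mul_apply, h2]
  have hQT : Qᵀ = Q := by rw [hQ]; simp [Matrix.transpose_sub, Matrix.transpose_smul, hJT]
  have hPmQ : Pm * Q = Pm := by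
    rw [hQ, Matrix.mul_sub, Matrix.mul_one, Matrix.mul_smul, hPmJ, smul_zero, sub_zero]
  have hQPm' : Q * Pm = Pm := by
    have h2 := congrArg Matrix.transpose hPmQ
    rwa [Matrix.transpose_mul, hQT, hPmT] at h2
  have hQapp : ∀ i j, Q i j = (if i = j then (1:ℝ) else 0) - (b:ℝ)⁻¹ := by
    intro i j
    rw [hQ]
    simp [Matrix.one_apply, hJ]
  have hQQ : Q * Q = Q := by
    ext i j
    rw [Matrix.mul_apply, hQapp i j]
    simp only [hQapp, sub_mul, mul_sub, Finset.sum_sub_distrib, ite_mul, mul_ite, one_mul,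
      mul_one, zero_mul, mul_zero, Finset.sum_const, Finset.card_univ, nsmul_eq_mul,
      Finset.sum_ite_eq, Finset.sum_ite_eq', Finset.mem_univ, if_true]
    by_cases h : i = j <;> simp [h] <;> field_simp <;> simp
  have htrQ : Q.trace = (b:ℝ) - 1 := by
    have hJtr : J.trace = (b:ℝ) := by simp [hJ, Matrix.trace, Matrix.diag, Finset.card_univ]
    rw [hQ, Matrix.trace_sub, Matrix.trace_smul, Matrix.trace_one, hJtr, smul_eq_mul,
      inv_mul_cancel₀ (ne_of_gt hb0)]
    simp
  have hQPm : Q = Pm := by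
    have hS2 : (Q - Pm) * (Q - Pm) = Q - Pm := by
      simp only [Matrix.sub_mul, Matrix.mul_sub, hQQ, hPmQ, hQPm', hPmPm]
      abel
    have hST2 : (Q - Pm)ᵀ = Q - Pm := by rw [Matrix.transpose_sub, hQT, hPmT]
    have hsym : ∀ i l, (Q - Pm) l i = (Q - Pm) i l := fun i l => congrFun (congrFun hST2 i) l
    have htrS : (Q - Pm).trace = 0 := by rw [Matrix.trace_sub, htrQ, htrPm, sub_self]
    have h4 : ((Q - Pm) * (Q - Pm)).trace = ∑ i, ∑ l, ((Q - Pm) i l)^2 := by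
      rw [Matrix.trace]
      refine Finset.sum_congr rfl fun i _ => ?_
      rw [Matrix.diag, Matrix.mul_apply]
      refine Finset.sum_congr rfl fun l _ => ?_
      rw [sq, hsym i l]
    rw [hS2, htrS] at h4
    have h6 : ∑ i, ∑ l, ((Q - Pm) i l)^2 = 0 := h4.symm
    have hzero : Q - Pm = 0 := by
      ext i l
      have h7 := (Finset.sum_eq_zero_iff_of_nonneg
        (fun i _ => Finset.sum_nonneg fun l _ => sq_nonneg ((Q - Pm) i l))).mp h6 i
        (Finset.mem_univ i)
      have h8 := (Finset.sum_eq_zero_iff_of_nonneg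
        (fun l _ => sq_nonneg ((Q - Pm) i l))).mp h7 l (Finset.mem_univ l)
      simpa using (pow_eq_zero_iff (two_ne_zero)).mp h8
    exact sub_eq_zero.mp hzero
  -- Loewner bound Ctp ≥ k⁻¹ Pm
  have hpsdDiff : (Ctp - (k:ℝ)⁻¹ • Pm).PosSemidef := by
    have hsm : (k:ℝ)⁻¹ • (U * diagonal (fun i => if d i = 0 then (0:ℝ) else 1) * star U)
        = U * diagonal (fun i => (k:ℝ)⁻¹ * (if d i = 0 then (0:ℝ) else 1)) * star U := by
      have hd2 : diagonal (fun i => (k:ℝ)⁻¹ * (if d i = 0 then (0:ℝ) else 1))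
          = (k:ℝ)⁻¹ • diagonal (fun i => if d i = 0 then (0:ℝ) else 1) := by
        ext i j
        by_cases h : i = j <;> simp [Matrix.diagonal, h]
      rw [hd2, Matrix.mul_smul, Matrix.smul_mul]
    have hdiff : Ctp - (k:ℝ)⁻¹ • Pm
        = U * diagonal (fun i => (d i)⁻¹ - (k:ℝ)⁻¹ * (if d i = 0 then (0:ℝ) else 1)) * star U := by
      rw [hCtpG, hG, hPm, hsm]
      rw [← Matrix.sub_mul, ← Matrix.mul_sub]
      have hd3 : diagonal (fun i => (d i)⁻¹) -
          diagonal (fun i => (k:ℝ)⁻¹ * (if d i = 0 then (0:ℝ) else 1))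
          = diagonal (fun i => (d i)⁻¹ - (k:ℝ)⁻¹ * (if d i = 0 then (0:ℝ) else 1)) := by
        ext i j
        by_cases h : i = j <;> simp [Matrix.diagonal, h]
      rw [hd3]
    rw [hdiff]
    have hdnn : ∀ i, 0 ≤ (d i)⁻¹ - (k:ℝ)⁻¹ * (if d i = 0 then (0:ℝ) else 1) := by
      intro i
      rcases eq_or_ne (d i) 0 with h | h
      · simp [h]
      · have hdi : 0 < d i := lt_of_le_of_ne (hd0 i) (Ne.symm h)
        have h2 : (1:ℝ)/k ≤ 1/(d i) := one_div_le_one_div_of_le hdi (hdk i)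
        rw [one_div, one_div] at h2
        simp only [h, if_false, mul_one]
        linarith
    have hdiagpsd : (diagonal
        (fun i => (d i)⁻¹ - (k:ℝ)⁻¹ * (if d i = 0 then (0:ℝ) else 1))).PosSemidef :=
      Matrix.PosSemidef.diagonal fun i => hdnn i
    have h5 := hdiagpsd.mul_mul_conjTranspose_same U
    rwa [Matrix.conjTranspose_eq_transpose_of_trivial, ← hsU] at h5
  -- the X matrix
  set W : Matrix (Fin v) (Fin b) ℝ := Rinv * M with hW
  have hWT : Mᵀ * Rinv = Wᵀ := by
    rw [hW, Matrix.transpose_mul, hRinv, Matrix.diagonal_transpose]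
  set X : Matrix (Fin b) (Fin b) ℝ := Wᵀ * W with hX
  have hXpsd : X.PosSemidef := by
    have h1 := Matrix.posSemidef_conjTranspose_mul_self W
    rwa [Matrix.conjTranspose_eq_transpose_of_trivial] at h1
  have htr3 : (W * Ctp * Mᵀ * Rinv).trace = (X * Ctp).trace := by
    have h1 : W * Ctp * Mᵀ * Rinv = W * Ctp * Wᵀ := by
      rw [Matrix.mul_assoc (W * Ctp) Mᵀ Rinv, hWT]
    rw [h1, Matrix.trace_mul_cycle W Ctp Wᵀ, hX]
  -- numeric facts about X
  have hWapp : ∀ t i, W t i = ((r t:ℝ))⁻¹ * M t i := by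
    intro t i
    rw [hW, hRinv, Matrix.diagonal_mul]
  have hsq : ∀ t, (r t : ℝ) ≤ ∑ i, (M t i)^2 := by
    intro t
    rw [← hMrow t]
    refine Finset.sum_le_sum fun i _ => ?_
    rw [hM]
    rcases Nat.eq_zero_or_pos (N t i) with h | h
    · simp [h]
    · have h1 : (1:ℝ) ≤ (N t i : ℝ) := by exact_mod_cast h
      nlinarith
  have hXapp : ∀ i l, X i l = ∑ t, W t i * W t l := by
    intro i l
    rw [hX, Matrix.mul_apply]
    simp [Matrix.transpose_apply]
  have hsumW : ∀ t, ∑ i, W t i = 1 := by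
    intro t
    simp only [hWapp]
    rw [← Finset.mul_sum, hMrow, inv_mul_cancel₀ (ne_of_gt (hr0 t))]
  have htrX : ∑ t, ((r t:ℝ))⁻¹ ≤ X.trace := by
    have h1 : X.trace = ∑ t, ((r t:ℝ))⁻¹^2 * ∑ i, (M t i)^2 := by
      rw [Matrix.trace]
      simp only [Matrix.diag, hXapp]
      rw [Finset.sum_comm]
      refine Finset.sum_congr rfl fun t _ => ?_
      rw [Finset.mul_sum]
      refine Finset.sum_congr rfl fun i _ => ?_
      rw [hWapp]
      ring
    rw [h1]
    refine Finset.sum_le_sum fun t _ => ?_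
    have h3 : ((r t:ℝ))⁻¹^2 * (r t:ℝ) ≤ ((r t:ℝ))⁻¹^2 * ∑ i, (M t i)^2 :=
      mul_le_mul_of_nonneg_left (hsq t) (by positivity)
    calc ((r t:ℝ))⁻¹ = ((r t:ℝ))⁻¹^2 * (r t:ℝ) := by
          rw [sq]
          field_simp
      _ ≤ _ := h3
  have htrXJ : (J * X).trace = (v:ℝ) := by
    have h1 : (J * X).trace = ∑ i, ∑ j, X j i := by
      rw [Matrix.trace]
      refine Finset.sum_congr rfl fun i _ => ?_
      rw [Matrix.diag, Matrix.mul_apply]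
      refine Finset.sum_congr rfl fun j _ => ?_
      simp [hJ]
    have h3 : ∀ i, ∑ j, X j i = ∑ t, W t i := by
      intro i
      simp only [hXapp]
      rw [Finset.sum_comm]
      refine Finset.sum_congr rfl fun t _ => ?_
      rw [← Finset.sum_mul, hsumW, one_mul]
    rw [h1]
    calc ∑ i, ∑ j, X j i = ∑ i, ∑ t, W t i := Finset.sum_congr rfl fun i _ => h3 i
      _ = ∑ t, ∑ i, W t i := Finset.sum_comm
      _ = (v:ℝ) := by simp [hsumW, Finset.card_univ]
  -- the T3 bound
  have hT3 : (k:ℝ)⁻¹ * (∑ t, ((r t:ℝ))⁻¹ - (v:ℝ)/b) ≤ (X * Ctp).trace := by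
    have h0 := trace_mul_nonneg hXpsd hpsdDiff
    have hexp : (X * (Ctp - (k:ℝ)⁻¹ • Pm)).trace
        = (X * Ctp).trace - (k:ℝ)⁻¹ * (X * Pm).trace := by
      rw [Matrix.mul_sub, Matrix.trace_sub, Matrix.mul_smul, Matrix.trace_smul, smul_eq_mul]
    have hXPm : (X * Pm).trace = X.trace - (b:ℝ)⁻¹ * (v:ℝ) := by
      rw [← hQPm, hQ, Matrix.mul_sub, Matrix.trace_sub, Matrix.mul_one, Matrix.mul_smul,
        Matrix.trace_smul, smul_eq_mul, Matrix.trace_mul_comm X J, htrXJ]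
    rw [hexp, hXPm] at h0
    have h2 : (k:ℝ)⁻¹ * (∑ t, ((r t:ℝ))⁻¹ - (v:ℝ)/b) ≤ (k:ℝ)⁻¹ * (X.trace - (b:ℝ)⁻¹ * v) := by
      apply mul_le_mul_of_nonneg_left _ (by positivity)
      have h4 : (v:ℝ)/b = (b:ℝ)⁻¹ * v := by rw [div_eq_mul_inv, mul_comm]
      rw [h4]
      linarith [htrX]
    linarith
  -- the T2 bound
  have hCtle : Ct.trace ≤ (b:ℝ)*k - v := by
    have h1 : Ct.trace = (b:ℝ)*k - ∑ i, ((r i:ℝ))⁻¹ * ∑ j, (M i j)^2 := by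
      rw [hCt, Matrix.trace_sub, Matrix.trace_smul, Matrix.trace_one, smul_eq_mul]
      congr 1
      · simp [Finset.card_univ, mul_comm]
      · rw [Matrix.trace]
        simp only [Matrix.diag, hentry]
        rw [Finset.sum_comm]
        refine Finset.sum_congr rfl fun i _ => ?_
        rw [Finset.mul_sum]
        refine Finset.sum_congr rfl fun j _ => ?_
        ring
    rw [h1]
    have h2 : (v:ℝ) ≤ ∑ i, ((r i:ℝ))⁻¹ * ∑ j, (M i j)^2 := by
      have h3 : ∀ i, (1:ℝ) ≤ ((r i:ℝ))⁻¹ * ∑ j, (M i j)^2 := by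
        intro i
        have h5 := mul_le_mul_of_nonneg_left (hsq i) (le_of_lt (inv_pos.mpr (hr0 i)))
        rwa [inv_mul_cancel₀ (ne_of_gt (hr0 i))] at h5
      calc (v:ℝ) = ∑ _i : Fin v, (1:ℝ) := by
            rw [Finset.sum_const, Finset.card_univ, Fintype.card_fin, nsmul_eq_mul, mul_one]
        _ ≤ _ := Finset.sum_le_sum fun i _ => h3 i
    linarith
  have hT2 : ((b:ℝ)-1)^2 / ((b:ℝ)*k - v) ≤ Ctp.trace := by
    have hpos : (0:ℝ) < (b:ℝ)*k - v := by linarith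
    by_cases hall : ∀ i, d i = 0
    · have hb1 : (Finset.univ.filter fun i => d i ≠ 0).card = 0 := by
        rw [Finset.card_eq_zero, Finset.filter_eq_empty_iff]
        intro i _
        simpa using hall i
      have hsub0 : b - 1 = 0 := by rw [← hcard, hb1]
      have hbeq : b = 1 := le_antisymm (Nat.sub_eq_zero_iff_le.mp hsub0) hb
      have hbr : (b:ℝ) - 1 = 0 := by simp [hbeq]
      rw [hbr]
      have h9 : (0:ℝ)^2 / ((b:ℝ)*k - v) = 0 := by simp
      rw [h9, htrCtp]
      exact Finset.sum_nonneg fun i _ => inv_nonneg.mpr (hd0 i)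
    · push_neg at hall
      obtain ⟨i0, hi0⟩ := hall
      have htrpos : 0 < Ct.trace := by
        rw [htrCt]
        exact Finset.sum_pos' (fun i _ => hd0 i)
          ⟨i0, Finset.mem_univ i0, lt_of_le_of_ne (hd0 i0) (Ne.symm hi0)⟩
      have hCS : ((b:ℝ)-1)^2 ≤ Ct.trace * Ctp.trace := by
        have h2 : ∀ i, Real.sqrt (d i) * Real.sqrt ((d i)⁻¹)
            = if d i = 0 then (0:ℝ) else 1 := by
          intro i
          rcases eq_or_ne (d i) 0 with h | h
          · simp [h]
          · rw [← Real.sqrt_mul (hd0 i), mul_inv_cancel₀ h, Real.sqrt_one]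
            simp [h]
        have h1 : ∑ i, Real.sqrt (d i) * Real.sqrt ((d i)⁻¹) = (b:ℝ) - 1 := by
          rw [Finset.sum_congr rfl fun i _ => h2 i]
          have h3 : ∑ i, (if d i = 0 then (0:ℝ) else 1)
              = ((Finset.univ.filter fun i => d i ≠ 0).card : ℝ) := by
            rw [Finset.card_filter]
            push_cast
            refine Finset.sum_congr rfl fun i _ => ?_
            by_cases h : d i = 0 <;> simp [h]
          rw [h3, hcard]
          simp [Nat.cast_sub hb]
        have h4 := Finset.sum_mul_sq_le_sq_mul_sq Finset.univ
          (fun i => Real.sqrt (d i)) (fun i => Real.sqrt ((d i)⁻¹))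
        rw [h1] at h4
        have h5 : ∀ i, Real.sqrt (d i)^2 = d i := fun i => Real.sq_sqrt (hd0 i)
        have h6 : ∀ i, Real.sqrt ((d i)⁻¹)^2 = (d i)⁻¹ :=
          fun i => Real.sq_sqrt (inv_nonneg.mpr (hd0 i))
        simp only [h5, h6] at h4
        rw [htrCt, htrCtp]
        exact h4
      have h7 : ((b:ℝ)-1)^2 / ((b:ℝ)*k - v) ≤ ((b:ℝ)-1)^2 / Ct.trace :=
        div_le_div_of_nonneg_left (sq_nonneg _) htrpos hCtle
      have h8 : ((b:ℝ)-1)^2 / Ct.trace ≤ Ctp.trace := by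
        rw [div_le_iff₀ htrpos]
        calc ((b:ℝ)-1)^2 ≤ Ct.trace * Ctp.trace := hCS
          _ = Ctp.trace * Ct.trace := mul_comm _ _
      linarith
  -- the H bound
  set f : ℕ := b * k / v with hfdef
  have hf1 : 1 ≤ f := (Nat.one_le_div_iff hv).mpr (le_of_lt hvbk)
  have hf0 : (0:ℝ) < f := by exact_mod_cast hf1
  have hvf : v * f ≤ b * k := by rw [mul_comm]; exact Nat.div_mul_le_self (b*k) v
  have hHsum : ((b * k - v * f : ℕ) : ℝ) / ((f : ℝ) + 1) +
      ((v : ℝ) - ((b * k - v * f : ℕ) : ℝ)) / (f : ℝ) ≤ ∑ i, ((r i : ℝ))⁻¹ := by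
    have hcast : ((b * k - v * f : ℕ) : ℝ) = (b:ℝ)*k - v*f := by
      rw [Nat.cast_sub hvf]
      push_cast
      ring
    have hsumr : ∑ i : Fin v, ((r i:ℝ)) = (b:ℝ)*k := by
      exact_mod_cast congrArg (Nat.cast : ℕ → ℝ) hsum
    have hsum2 : ∑ i : Fin v, (1/(f:ℝ) - ((r i:ℝ) - f)/((f:ℝ)*((f:ℝ)+1)))
        = (v:ℝ)/f - ((b:ℝ)*k - (v:ℝ)*f)/((f:ℝ)*((f:ℝ)+1)) := by
      rw [Finset.sum_sub_distrib]
      congr 1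
      · rw [Finset.sum_const, Finset.card_univ, Fintype.card_fin, nsmul_eq_mul, mul_one_div]
      · rw [← Finset.sum_div]
        congr 1
        rw [Finset.sum_sub_distrib, hsumr, Finset.sum_const, Finset.card_univ, Fintype.card_fin,
          nsmul_eq_mul]
    have hfinal : ((b * k - v * f : ℕ) : ℝ) / ((f : ℝ) + 1) +
        ((v : ℝ) - ((b * k - v * f : ℕ) : ℝ)) / (f : ℝ)
        = (v:ℝ)/f - ((b:ℝ)*k - (v:ℝ)*f)/((f:ℝ)*((f:ℝ)+1)) := by
      rw [hcast]
      have hfne : (f:ℝ) ≠ 0 := ne_of_gt hf0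
      have hfne1 : (f:ℝ) + 1 ≠ 0 := by positivity
      field_simp
      ring
    rw [hfinal, ← hsum2]
    exact Finset.sum_le_sum fun i _ => inv_ge_line f (r i) hf1 (hr i)
  -- final assembly
  set H : ℝ := ((b * k - v * f : ℕ) : ℝ) / ((f : ℝ) + 1) +
    ((v : ℝ) - ((b * k - v * f : ℕ) : ℝ)) / (f : ℝ) with hHdef
  set L : ℝ := ((b:ℝ) - 1)^2 / ((b:ℝ)*k - v) with hLdef
  rw [ge_iff_le, htr3]
  have hvne : (v:ℝ) ≠ 0 := ne_of_gt hv0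
  have hbne : (b:ℝ) ≠ 0 := ne_of_gt hb0
  have hkne : (k:ℝ) ≠ 0 := ne_of_gt hk0
  have key3 : (k:ℝ)⁻¹ * (H - (v:ℝ)/b) ≤ (X * Ctp).trace := by
    refine le_trans ?_ hT3
    apply mul_le_mul_of_nonneg_left _ (by positivity)
    linarith [hHsum]
  have hident : 1 + (((k:ℝ)+1)/((v:ℝ)*k)) * H + (b:ℝ)⁻¹ * L - 1/((b:ℝ)*k)
      = 1 + (v:ℝ)⁻¹ * H + (b:ℝ)⁻¹ * L + (v:ℝ)⁻¹ * ((k:ℝ)⁻¹ * (H - (v:ℝ)/b)) := by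
    field_simp
    ring
  rw [hident]
  have t1 : (v:ℝ)⁻¹ * H ≤ (v:ℝ)⁻¹ * ∑ i, ((r i:ℝ))⁻¹ :=
    mul_le_mul_of_nonneg_left hHsum (by positivity)
  have t2 : (b:ℝ)⁻¹ * L ≤ (b:ℝ)⁻¹ * Ctp.trace :=
    mul_le_mul_of_nonneg_left hT2 (by positivity)
  have t3 : (v:ℝ)⁻¹ * ((k:ℝ)⁻¹ * (H - (v:ℝ)/b)) ≤ (v:ℝ)⁻¹ * (X * Ctp).trace :=
    mul_le_mul_of_nonneg_left key3 (by positivity)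
  linarith
end

section
/- For any connected block design d in D(b,v,k), the test-versus-test A-criterion A_{tt}(s) = 2[1 + (s/(bs−1)) tr(C̃^+)] satisfies A_{tt}(s) ≥ 2[1 + (s/(bs−1))·(b−1)^2/(bk−v)] for every positive integer s. -/
open BigOperators Matrix

/-- Uniqueness of the Moore–Penrose inverse. -/
lemma mp_unique_s10 {n : ℕ} {A P Q : Matrix (Fin n) (Fin n) ℝ}
    (hP : IsMoorePenrose A P) (hQ : IsMoorePenrose A Q) : P = Q := by
  obtain ⟨p1, p2, p3, p4⟩ := hP
  obtain ⟨q1, q2, q3, q4⟩ := hQ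
  have e3 : (A * P) * (A * Q) = A * Q := by
    conv_rhs => rw [← p1]
    simp only [mul_assoc]
  have hap : A * P = A * Q := by
    calc A * P = (A * Q) * (A * P) := by
          conv_lhs => rw [← q1]
          simp only [mul_assoc]
      _ = ((A * P) * (A * Q))ᵀ := by rw [Matrix.transpose_mul, q3, p3]
      _ = (A * Q)ᵀ := by rw [e3]
      _ = A * Q := q3
  have e3' : (Q * A) * (P * A) = Q * A := by
    conv_rhs => rw [← p1]
    simp only [mul_assoc]
  have hpa : P * A = Q * A := by
    calc P * A = (P * A) * (Q * A) := by
          conv_lhs => rw [← q1]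
          simp only [mul_assoc]
      _ = ((Q * A) * (P * A))ᵀ := by rw [Matrix.transpose_mul, q4, p4]
      _ = (Q * A)ᵀ := by rw [e3']
      _ = Q * A := q4
  calc P = P * A * P := p2.symm
    _ = P * (A * Q) := by rw [mul_assoc, hap]
    _ = (Q * A) * Q := by rw [← mul_assoc, hpa]
    _ = Q := q2

/-- The trace of a Hermitian real matrix is the sum of its eigenvalues. -/
lemma trace_eq_sum_eigen {n : ℕ} {Q : Matrix (Fin n) (Fin n) ℝ} (hQ : Q.IsHermitian) :
    Q.trace = ∑ i, hQ.eigenvalues i := by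
  conv_lhs => rw [hQ.spectral_theorem]
  rw [Unitary.conjStarAlgAut_apply]
  rw [Matrix.trace_mul_comm, ← mul_assoc,
    (Matrix.mem_unitaryGroup_iff').mp hQ.eigenvectorUnitary.2, one_mul, Matrix.trace_diagonal]
  simp [RCLike.ofReal_real_eq_id]

/-- The trace of a symmetric idempotent real matrix equals its rank. -/
lemma trace_idem {n : ℕ} {Q : Matrix (Fin n) (Fin n) ℝ} (hQ : Q.IsHermitian)
    (hidem : Q * Q = Q) : Q.trace = (Q.rank : ℝ) := by
  classical
  have hdiag := hQ.conjStarAlgAut_star_eigenvectorUnitary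
  simp only [Unitary.conjStarAlgAut_star_apply, Unitary.coe_star] at hdiag
  set U : Matrix (Fin n) (Fin n) ℝ := (hQ.eigenvectorUnitary : Matrix (Fin n) (Fin n) ℝ) with hU
  have hUU : U * star U = 1 := (Matrix.mem_unitaryGroup_iff).mp hQ.eigenvectorUnitary.2
  have hDD : Matrix.diagonal ((RCLike.ofReal ∘ hQ.eigenvalues : Fin n → ℝ)) *
      Matrix.diagonal ((RCLike.ofReal ∘ hQ.eigenvalues : Fin n → ℝ))
      = Matrix.diagonal ((RCLike.ofReal ∘ hQ.eigenvalues : Fin n → ℝ)) := by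
    conv_lhs => rw [← hdiag]
    calc (star U * Q * U) * (star U * Q * U)
        = star U * Q * (U * star U) * Q * U := by simp only [mul_assoc]
      _ = star U * (Q * Q) * U := by rw [hUU]; simp only [mul_assoc, one_mul]
      _ = star U * Q * U := by rw [hidem, mul_assoc]
      _ = _ := hdiag
  have hev : ∀ i, hQ.eigenvalues i = 0 ∨ hQ.eigenvalues i = 1 := by
    intro i
    have := congrFun (congrFun hDD i) i
    simp only [Matrix.diagonal_mul_diagonal, Matrix.diagonal_apply_eq, Function.comp_apply,
      RCLike.ofReal_real_eq_id, id] at this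
    have h0 : hQ.eigenvalues i * (hQ.eigenvalues i - 1) = 0 := by linear_combination this
    rcases mul_eq_zero.mp h0 with h | h
    · exact Or.inl h
    · exact Or.inr (by linarith)
  have htr : Q.trace = ∑ i, hQ.eigenvalues i := trace_eq_sum_eigen hQ
  rw [htr, hQ.rank_eq_card_non_zero_eigs, Fintype.card_subtype]
  rw [← Finset.sum_filter_ne_zero Finset.univ]
  rw [Finset.sum_congr rfl (fun i hi => ?_), Finset.sum_const, nsmul_eq_mul, mul_one,
    Nat.cast_inj.mpr rfl]
  · rcases hev i with h | h
    · exact absurd h (Finset.mem_filter.mp hi).2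
    · exact h

/-- Cauchy–Schwarz for the trace inner product on real matrices. -/
lemma trace_cs {n : ℕ} (X Y : Matrix (Fin n) (Fin n) ℝ) :
    (Matrix.trace (Xᵀ * Y))^2 ≤ Matrix.trace (Xᵀ * X) * Matrix.trace (Yᵀ * Y) := by
  have key : ∀ Z W : Matrix (Fin n) (Fin n) ℝ,
      Matrix.trace (Zᵀ * W) = ∑ p : Fin n × Fin n, Z p.1 p.2 * W p.1 p.2 := by
    intro Z W
    rw [Matrix.trace, Fintype.sum_prod_type]
    simp only [Matrix.diag, Matrix.mul_apply, Matrix.transpose_apply]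
    exact Finset.sum_comm
  rw [key, key, key]
  have := Finset.sum_mul_sq_le_sq_mul_sq Finset.univ
    (fun p : Fin n × Fin n => X p.1 p.2) (fun p : Fin n × Fin n => Y p.1 p.2)
  simpa [pow_two] using this

/-- Theorem 1(b): for any connected block design in `D(b,v,k)`, the criterion
`A_tt(s) = 2[1 + (s/(bs−1)) tr(C̃⁺)]` satisfies
`A_tt(s) ≥ 2[1 + (s/(bs−1))·(b−1)²/(bk−v)]` for every positive integer `s`. -/
theorem stmt_10 (v b k : ℕ) (hv : 0 < v) (hb : 2 ≤ b) (hk : 0 < k) (hvbk : v < b * k)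
    (N : Fin v → Fin b → ℕ) (hcol : ∀ j, ∑ i, N i j = k)
    (r : Fin v → ℕ) (hrdef : ∀ i, r i = ∑ j, N i j) (hr : ∀ i, 0 < r i)
    (M : Matrix (Fin v) (Fin b) ℝ) (hM : ∀ i j, M i j = (N i j : ℝ))
    (Ct Ctp : Matrix (Fin b) (Fin b) ℝ)
    (hCt : Ct = (k : ℝ) • (1 : Matrix (Fin b) (Fin b) ℝ) -
      Mᵀ * Matrix.diagonal (fun i => ((r i : ℝ))⁻¹) * M)
    (hpsd : Ct.PosSemidef) (hrank : Ct.rank = b - 1)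
    (hmp : IsMoorePenrose Ct Ctp) :
    ∀ s : ℕ, 0 < s →
      2 * (1 + ((s : ℝ) / ((b : ℝ) * s - 1)) * Ctp.trace) ≥
        2 * (1 + ((s : ℝ) / ((b : ℝ) * s - 1)) *
          (((b : ℝ) - 1) ^ 2 / ((b : ℝ) * k - v))) := by
  intro s hs
  classical
  have h1 := hmp.1
  have h2 := hmp.2.1
  have h3 := hmp.2.2.1
  have h4 := hmp.2.2.2
  have hconj : ∀ {m p : ℕ} (X : Matrix (Fin m) (Fin p) ℝ), Xᴴ = Xᵀ := by
    intro m p X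
    ext i j
    simp [Matrix.conjTranspose_apply]
  have hAt : Ctᵀ = Ct := by rw [← hconj]; exact hpsd.1
  -- Ctp is symmetric, by uniqueness of the Moore–Penrose inverse
  have hmpT : IsMoorePenrose Ct Ctpᵀ := by
    refine ⟨?_, ?_, ?_, ?_⟩
    · have := congrArg Matrix.transpose h1
      simpa [Matrix.transpose_mul, hAt, mul_assoc] using this
    · have := congrArg Matrix.transpose h2
      simpa [Matrix.transpose_mul, hAt, mul_assoc] using this
    · have e : Ct * Ctpᵀ = (Ctp * Ct)ᵀ := by rw [Matrix.transpose_mul, hAt]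
      rw [e, Matrix.transpose_transpose]
      exact h4.symm
    · have e : Ctpᵀ * Ct = (Ct * Ctp)ᵀ := by rw [Matrix.transpose_mul, hAt]
      rw [e, Matrix.transpose_transpose]
      exact h3.symm
  have hPt : Ctpᵀ = Ctp := mp_unique_s10 hmpT hmp
  have hPconj : Ctpᴴ = Ctp := by rw [hconj]; exact hPt
  have hPpsd : Ctp.PosSemidef := by
    have := hpsd.conjTranspose_mul_mul_same Ctp
    rwa [hPconj, h2] at this
  have hPtr : 0 ≤ Ctp.trace := by
    rw [trace_eq_sum_eigen hPpsd.1]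
    exact Finset.sum_nonneg fun i _ => hPpsd.eigenvalues_nonneg i
  -- the projection Q = Ct * Ctp
  have hQherm : (Ct * Ctp).IsHermitian := by
    show (Ct * Ctp)ᴴ = Ct * Ctp
    rw [hconj]; exact h3
  have hQidem : (Ct * Ctp) * (Ct * Ctp) = Ct * Ctp := by
    calc (Ct * Ctp) * (Ct * Ctp) = (Ct * Ctp * Ct) * Ctp := by simp only [mul_assoc]
      _ = Ct * Ctp := by rw [h1]
  have hrankQ : (Ct * Ctp).rank = b - 1 := by
    have hle1 : (Ct * Ctp).rank ≤ Ct.rank := Matrix.rank_mul_le_left Ct Ctp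
    have hle2 : Ct.rank ≤ (Ct * Ctp).rank := by
      conv_lhs => rw [← h1]
      exact Matrix.rank_mul_le_left (Ct * Ctp) Ct
    exact (le_antisymm hle1 hle2).trans hrank
  have htrQ : (Ct * Ctp).trace = (b : ℝ) - 1 := by
    rw [trace_idem hQherm hQidem, hrankQ]
    have hb1 : (1 : ℕ) ≤ b := le_trans one_le_two hb
    push_cast [Nat.cast_sub hb1]
    ring
  -- Cauchy–Schwarz step
  open scoped MatrixOrder in
  set S := CFC.sqrt Ct with hSdef
  open scoped MatrixOrder in
  have hSsym : Sᵀ = S := by rw [← hconj]; exact (CFC.sqrt_nonneg Ct).posSemidef.1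
  open scoped MatrixOrder in
  have hSS : S * S = Ct := CFC.sqrt_mul_sqrt_self Ct hpsd.nonneg
  have hcs := trace_cs S (S * Ctp)
  rw [hSsym] at hcs
  have e1 : S * (S * Ctp) = Ct * Ctp := by rw [← mul_assoc, hSS]
  have e2 : (S * Ctp)ᵀ * (S * Ctp) = Ctp := by
    rw [Matrix.transpose_mul, hSsym, hPt]
    calc (Ctp * S) * (S * Ctp) = Ctp * ((S * S) * Ctp) := by simp only [mul_assoc]
      _ = Ctp := by rw [hSS, ← mul_assoc, h2]
  rw [e1, hSS, e2, htrQ] at hcs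
  -- trace bound for Ct
  have hrne : ∀ i, ((r i : ℝ)) ≠ 0 := fun i => Nat.cast_ne_zero.mpr (hr i).ne'
  have htr1 : Matrix.trace ((k : ℝ) • (1 : Matrix (Fin b) (Fin b) ℝ)) = (b : ℝ) * k := by
    rw [Matrix.trace_smul, Matrix.trace_one, smul_eq_mul, Fintype.card_fin]
    ring
  have hdiagT : ∀ j, (Mᵀ * Matrix.diagonal (fun i => ((r i : ℝ))⁻¹) * M) j j
      = ∑ i, ((r i : ℝ))⁻¹ * ((N i j : ℝ) * (N i j : ℝ)) := by
    intro j
    rw [Matrix.mul_apply]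
    refine Finset.sum_congr rfl fun i _ => ?_
    rw [Matrix.mul_diagonal, Matrix.transpose_apply, hM]
    ring
  have hnn : ∀ m : ℕ, m ≤ m * m := by
    intro m
    cases m with
    | zero => simp
    | succ t => exact Nat.le_mul_of_pos_left _ (Nat.succ_pos t)
  have hTgt : (v : ℝ) ≤ Matrix.trace (Mᵀ * Matrix.diagonal (fun i => ((r i : ℝ))⁻¹) * M) := by
    have hstep : ∀ i : Fin v, (1 : ℝ) ≤ ((r i : ℝ))⁻¹ * ∑ j, (N i j : ℝ) * (N i j : ℝ) := by
      intro i
      have h1' : (r i : ℝ) ≤ ∑ j, (N i j : ℝ) * (N i j : ℝ) := by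
        rw [hrdef]
        push_cast
        exact Finset.sum_le_sum fun j _ => by exact_mod_cast hnn (N i j)
      calc (1 : ℝ) = ((r i : ℝ))⁻¹ * (r i : ℝ) := (inv_mul_cancel₀ (hrne i)).symm
        _ ≤ _ := mul_le_mul_of_nonneg_left h1' (by positivity)
    calc (v : ℝ) = ∑ _i : Fin v, (1 : ℝ) := by simp
      _ ≤ ∑ i : Fin v, ((r i : ℝ))⁻¹ * ∑ j, (N i j : ℝ) * (N i j : ℝ) :=
          Finset.sum_le_sum fun i _ => hstep i
      _ = ∑ i : Fin v, ∑ j, ((r i : ℝ))⁻¹ * ((N i j : ℝ) * (N i j : ℝ)) := by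
          simp [Finset.mul_sum]
      _ = ∑ j, ∑ i : Fin v, ((r i : ℝ))⁻¹ * ((N i j : ℝ) * (N i j : ℝ)) := Finset.sum_comm
      _ = Matrix.trace (Mᵀ * Matrix.diagonal (fun i => ((r i : ℝ))⁻¹) * M) := by
          rw [Matrix.trace]
          exact Finset.sum_congr rfl fun j _ => (hdiagT j).symm
  have htrCt : Ct.trace ≤ (b : ℝ) * k - v := by
    rw [hCt, Matrix.trace_sub, htr1]
    linarith
  -- combine
  have hkey : ((b : ℝ) - 1) ^ 2 ≤ ((b : ℝ) * k - v) * Ctp.trace :=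
    le_trans hcs (mul_le_mul_of_nonneg_right htrCt hPtr)
  have hbkv : (0 : ℝ) < (b : ℝ) * k - v := by
    have : (v : ℝ) < (b : ℝ) * k := by exact_mod_cast hvbk
    linarith
  have htrP : ((b : ℝ) - 1) ^ 2 / ((b : ℝ) * k - v) ≤ Ctp.trace := by
    rw [div_le_iff₀ hbkv]
    linarith
  have hc : 0 ≤ (s : ℝ) / ((b : ℝ) * s - 1) := by
    have h2s : (2 : ℝ) ≤ (b : ℝ) * s := by
      have : (2 : ℕ) ≤ b * s := le_trans hb (Nat.le_mul_of_pos_right b hs)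
      exact_mod_cast this
    apply div_nonneg (Nat.cast_nonneg s)
    linarith
  have := mul_le_mul_of_nonneg_left htrP hc
  linarith
end

section
/- Let d be an equireplicate connected block design (as above, with R = rI_v, bk = vr). Then tr(R^{−1} N C̃^+ Nᵀ R^{−1}) = (v/b) tr(C̃^+) − (b−1)/r. -/
open BigOperators Matrix

lemma trace_eq_rank_of_idem {n : ℕ} (P : Matrix (Fin n) (Fin n) ℝ) (h : P * P = P) :
    P.trace = (P.rank : ℝ) := by
  have hf : P.mulVecLin ∘ₗ P.mulVecLin = P.mulVecLin := by
    rw [← Matrix.mulVecLin_mul, h]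
  have hproj : LinearMap.IsProj (LinearMap.range P.mulVecLin) P.mulVecLin := by
    constructor
    · intro x; exact LinearMap.mem_range_self _ x
    · rintro x ⟨y, rfl⟩
      exact congrFun (congrArg DFunLike.coe hf) y
  have := hproj.trace
  rw [Matrix.rank]
  rw [← this]
  rw [LinearMap.trace_eq_matrix_trace ℝ (Pi.basisFun ℝ (Fin n))]
  congr 1
  ext i j
  simp [LinearMap.toMatrix, Matrix.mulVecLin, Matrix.mulVec, dotProduct, Pi.basisFun]

/-- For an equireplicate connected block design (`R = rI_v`, `bk = vr`),
`tr(R⁻¹ N C̃⁺ Nᵀ R⁻¹) = (v/b) tr(C̃⁺) − (b−1)/r`. -/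
theorem stmt_13 (v b k rr : ℕ) (hv : 0 < v) (hb : 0 < b) (hk : 0 < k) (hr : 0 < rr)
    (hbk : b * k = v * rr)
    (N : Fin v → Fin b → ℕ) (hrow : ∀ i, ∑ j, N i j = rr) (hcol : ∀ j, ∑ i, N i j = k)
    (M : Matrix (Fin v) (Fin b) ℝ) (hM : ∀ i j, M i j = (N i j : ℝ))
    (Ct Ctp : Matrix (Fin b) (Fin b) ℝ)
    (hCt : Ct = (k : ℝ) • (1 : Matrix (Fin b) (Fin b) ℝ) - (rr : ℝ)⁻¹ • (Mᵀ * M))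
    (hrankCt : Ct.rank = b - 1)
    (hmpCt : IsMoorePenrose Ct Ctp) :
    (((rr : ℝ)⁻¹ • (1 : Matrix (Fin v) (Fin v) ℝ)) * M * Ctp * Mᵀ *
        ((rr : ℝ)⁻¹ • (1 : Matrix (Fin v) (Fin v) ℝ))).trace =
      ((v : ℝ) / b) * Ctp.trace - ((b : ℝ) - 1) / rr := by
  have hrne : (rr : ℝ) ≠ 0 := Nat.cast_ne_zero.mpr hr.ne'
  have hbne : (b : ℝ) ≠ 0 := Nat.cast_ne_zero.mpr hb.ne'
  -- P = Ct * Ctp is idempotent with rank = rank Ct = b - 1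
  have hidem : (Ct * Ctp) * (Ct * Ctp) = Ct * Ctp := by
    calc (Ct * Ctp) * (Ct * Ctp) = (Ct * Ctp * Ct) * Ctp := by
          rw [Matrix.mul_assoc, Matrix.mul_assoc, Matrix.mul_assoc]
    _ = Ct * Ctp := by rw [hmpCt.1]
  have hrank : (Ct * Ctp).rank = Ct.rank := by
    apply le_antisymm (Matrix.rank_mul_le_left Ct Ctp)
    calc Ct.rank = ((Ct * Ctp) * Ct).rank := by rw [hmpCt.1]
    _ ≤ (Ct * Ctp).rank := Matrix.rank_mul_le_left _ _
  have htr : (Ct * Ctp).trace = (b : ℝ) - 1 := by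
    rw [trace_eq_rank_of_idem _ hidem, hrank, hrankCt]
    have : (1 : ℕ) ≤ b := hb
    push_cast [this]
    ring
  -- Mᵀ M = rr • (k • 1 - Ct)
  have hMM : Mᵀ * M = (rr : ℝ) • ((k : ℝ) • (1 : Matrix (Fin b) (Fin b) ℝ) - Ct) := by
    rw [hCt]
    rw [sub_sub_cancel, smul_smul, mul_inv_cancel₀ hrne, one_smul]
  -- simplify the LHS matrix
  have hmat : (((rr : ℝ)⁻¹ • (1 : Matrix (Fin v) (Fin v) ℝ)) * M * Ctp * Mᵀ *
      ((rr : ℝ)⁻¹ • (1 : Matrix (Fin v) (Fin v) ℝ))) =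
      ((rr : ℝ)⁻¹ * (rr : ℝ)⁻¹) • (M * Ctp * Mᵀ) := by
    simp [Matrix.smul_mul, Matrix.mul_smul, smul_smul]
  rw [hmat, Matrix.trace_smul, smul_eq_mul]
  have hcyc : (M * Ctp * Mᵀ).trace = (Mᵀ * M * Ctp).trace := by
    rw [Matrix.trace_mul_comm, Matrix.mul_assoc]
  rw [hcyc, hMM, Matrix.smul_mul, Matrix.trace_smul, smul_eq_mul, Matrix.sub_mul,
    Matrix.trace_sub, Matrix.smul_mul, one_mul, Matrix.trace_smul, smul_eq_mul, htr]
  -- now pure arithmetic with b*k = v*rr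
  have hbk' : (b : ℝ) * k = (v : ℝ) * rr := by exact_mod_cast hbk
  have hkr : (k : ℝ) / rr = (v : ℝ) / b := by
    rw [div_eq_div_iff hrne hbne]
    linarith [hbk']
  field_simp
  field_simp at hkr
  linear_combination Ctp.trace * hkr
end

section
/- Suppose s_1, …, s_b are positive integers with minimum s_0 and mean s̄ = (∑ s_j)/b, and V_{tt}(j,j*) = (ẽ_j − ẽ_{j*})ᵀ C̃^+ (ẽ_j − ẽ_{j*}) where C̃^+ ⪰ (1/k)(I_b − b^{−1}1_b1_bᵀ) and tr(C̃^+) ≥ L̃. Then ∑∑_{1≤j<j*≤b} s_j s_{j*} V_{tt}(j,j*) ≥ (2/k) ∑∑_{1≤j<j*≤b} (s_j s_{j*} − s_0²) + s_0² b L̃. -/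
open BigOperators Matrix Finset

lemma quadform_aux (b : ℕ) (C : Matrix (Fin b) (Fin b) ℝ) (j j' : Fin b) :
    (Pi.single j (1:ℝ) - Pi.single j' 1) ⬝ᵥ (C *ᵥ (Pi.single j 1 - Pi.single j' 1)) =
    C j j - C j j' - C j' j + C j' j' := by
  simp [sub_dotProduct, Matrix.mulVec_sub, Matrix.mulVec_single, single_dotProduct,
    dotProduct_sub]
  ring

/-- For positive integers `s_1,…,s_b` with minimum `s_0`, and
`V_tt(j,j*) = (ẽ_j − ẽ_{j*})ᵀ C̃⁺ (ẽ_j − ẽ_{j*})` with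
`C̃⁺ ⪰ (1/k)(I_b − b⁻¹11ᵀ)` and `tr(C̃⁺) ≥ L̃`:
`∑∑_{j<j*} s_j s_{j*} V_tt(j,j*) ≥ (2/k)∑∑_{j<j*}(s_j s_{j*} − s_0²) + s_0² b L̃`. -/
theorem stmt_18 (b k : ℕ) (hb : 2 ≤ b) (hk : 0 < k)
    (s : Fin b → ℕ) (hs : ∀ j, 0 < s j)
    (s0 : ℕ) (hs0le : ∀ j, s0 ≤ s j) (hs0mem : ∃ j, s j = s0)
    (Ltilde : ℝ) (hL : 0 ≤ Ltilde)
    (Ctp : Matrix (Fin b) (Fin b) ℝ) (hsymm : Ctp.IsSymm)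
    (hrow0 : Ctp *ᵥ 1 = 0) (hcol0 : 1 ᵥ* Ctp = 0)
    (hdom : (Ctp - (k : ℝ)⁻¹ • ((1 : Matrix (Fin b) (Fin b) ℝ) -
      (b : ℝ)⁻¹ • Matrix.of (fun _ _ => (1 : ℝ)))).PosSemidef)
    (htr : Ctp.trace ≥ Ltilde) :
    ∑ p ∈ Finset.univ.filter (fun p : Fin b × Fin b => p.1 < p.2),
        (s p.1 : ℝ) * (s p.2 : ℝ) *
          ((Pi.single p.1 (1 : ℝ) - Pi.single p.2 (1 : ℝ)) ⬝ᵥ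
            (Ctp *ᵥ (Pi.single p.1 (1 : ℝ) - Pi.single p.2 (1 : ℝ)))) ≥
      (2 / (k : ℝ)) * ∑ p ∈ Finset.univ.filter (fun p : Fin b × Fin b => p.1 < p.2),
          ((s p.1 : ℝ) * (s p.2 : ℝ) - (s0 : ℝ) ^ 2) +
        (s0 : ℝ) ^ 2 * (b : ℝ) * Ltilde := by
  have hkpos : (0:ℝ) < (k:ℝ) := by exact_mod_cast hk
  set V : Fin b → Fin b → ℝ := fun j j' =>
    Ctp j j - Ctp j j' - Ctp j' j + Ctp j' j' with hVdef
  set T := Finset.univ.filter (fun p : Fin b × Fin b => p.1 < p.2) with hT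
  -- row sums are zero
  have hrow : ∀ j, ∑ l, Ctp j l = 0 := by
    intro j
    have := congrFun hrow0 j
    simpa [Matrix.mulVec, dotProduct] using this
  have htot : ∑ j, ∑ l, Ctp j l = 0 := by simp [hrow]
  have htrace : Ctp.trace = ∑ j, Ctp j j := rfl
  -- lower bound on V
  have hVlb : ∀ j j', j ≠ j' → 2 / (k:ℝ) ≤ V j j' := by
    intro j j' hne
    have h0 := hdom.dotProduct_mulVec_nonneg (Pi.single j (1:ℝ) - Pi.single j' 1)
    have h0' : 0 ≤ (Pi.single j (1:ℝ) - Pi.single j' 1) ⬝ᵥ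
        ((Ctp - (k : ℝ)⁻¹ • ((1 : Matrix (Fin b) (Fin b) ℝ) -
          (b : ℝ)⁻¹ • Matrix.of (fun _ _ => (1 : ℝ)))) *ᵥ
          (Pi.single j (1:ℝ) - Pi.single j' 1)) := by simpa using h0
    rw [Matrix.sub_mulVec, dotProduct_sub, Matrix.smul_mulVec, dotProduct_smul,
      quadform_aux, quadform_aux] at h0'
    simp only [Matrix.sub_apply, Matrix.smul_apply, Matrix.one_apply, Matrix.of_apply,
      smul_eq_mul, if_pos rfl, if_neg hne, if_neg hne.symm] at h0'
    have h2k : 2 / (k:ℝ) = (k:ℝ)⁻¹ * 2 := by ring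
    rw [h2k, hVdef]
    dsimp only
    ring_nf at h0' ⊢
    simp only [if_true] at h0'
    linarith [h0']
  -- sum identity : ∑_{j<j'} V = b * trace
  have hswap : ∀ g : Fin b × Fin b → ℝ,
      ∑ p ∈ Finset.univ.filter (fun p : Fin b × Fin b => p.2 < p.1), g p
        = ∑ p ∈ T, g p.swap := by
    intro g
    refine Finset.sum_nbij' (fun p => Prod.swap p) (fun p => Prod.swap p) ?_ ?_ ?_ ?_ ?_ <;>
      simp [hT]
  have hsplit : ∀ g : Fin b × Fin b → ℝ,
      ∑ p ∈ Finset.univ.filter (fun p : Fin b × Fin b => p.1 ≠ p.2), g p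
        = ∑ p ∈ T, g p + ∑ p ∈ Finset.univ.filter (fun p : Fin b × Fin b => p.2 < p.1), g p := by
    intro g
    rw [← Finset.sum_union]
    · congr 1
      ext p
      simp only [Finset.mem_filter, Finset.mem_union, Finset.mem_univ, true_and, hT]
      exact ne_iff_lt_or_gt
    · rw [Finset.disjoint_left]
      intro p hp hp'
      simp only [hT, Finset.mem_filter] at hp hp'
      exact absurd hp'.2 (not_lt.mpr hp.2.le)
  have hne_sum : ∀ g : Fin b × Fin b → ℝ,
      ∑ p ∈ Finset.univ.filter (fun p : Fin b × Fin b => p.1 ≠ p.2), g p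
        = (∑ p : Fin b × Fin b, g p) - ∑ j, g (j, j) := by
    intro g
    have h1 : ∑ p ∈ Finset.univ.filter (fun p : Fin b × Fin b => p.1 = p.2), g p
        = ∑ j, g (j, j) := by
      rw [Finset.sum_filter, Fintype.sum_prod_type]
      simp
    have h2 := Finset.sum_filter_add_sum_filter_not (Finset.univ : Finset (Fin b × Fin b))
      (fun p => p.1 = p.2) g
    have : ∑ p ∈ Finset.univ.filter (fun p : Fin b × Fin b => ¬ p.1 = p.2), g p
        = (∑ p : Fin b × Fin b, g p) - ∑ j, g (j, j) := by
      rw [← h1]; linarith [h2]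
    simpa using this
  have hVsum : ∑ p ∈ T, V p.1 p.2 = (b:ℝ) * Ctp.trace := by
    have hsym : ∀ p : Fin b × Fin b, V p.swap.1 p.swap.2 = V p.1 p.2 := by
      intro p; simp [hVdef]; ring
    have h2T : 2 * ∑ p ∈ T, V p.1 p.2
        = ∑ p ∈ Finset.univ.filter (fun p : Fin b × Fin b => p.1 ≠ p.2), V p.1 p.2 := by
      rw [hsplit, hswap]
      rw [Finset.sum_congr rfl (fun p _ => hsym p)]
      ring
    have hcalc : ∑ p ∈ Finset.univ.filter (fun p : Fin b × Fin b => p.1 ≠ p.2), V p.1 p.2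
        = 2 * (b:ℝ) * Ctp.trace := by
      rw [hne_sum]
      have hall : ∑ p : Fin b × Fin b, V p.1 p.2
          = (b:ℝ) * Ctp.trace + (b:ℝ) * Ctp.trace - 0 - 0 := by
        rw [Fintype.sum_prod_type]
        simp only [hVdef]
        push_cast
        rw [htrace]
        have : ∀ j : Fin b, ∑ j' : Fin b,
            (Ctp j j - Ctp j j' - Ctp j' j + Ctp j' j')
            = (b:ℝ) * Ctp j j - (∑ j', Ctp j j') - (∑ j', Ctp j' j) + ∑ j', Ctp j' j' := by
          intro j
          rw [Finset.sum_add_distrib, Finset.sum_sub_distrib, Finset.sum_sub_distrib]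
          simp [Finset.sum_const, Finset.card_univ, mul_comm]
        rw [Finset.sum_congr rfl (fun j _ => this j)]
        have hcolsum : ∀ j : Fin b, ∑ j', Ctp j' j = 0 := by
          intro j
          have := congrFun hcol0 j
          simpa [Matrix.vecMul, dotProduct] using this
        simp only [hrow, hcolsum, sub_zero]
        rw [Finset.sum_add_distrib, ← Finset.mul_sum]
        simp [Finset.sum_const, Finset.card_univ, mul_comm]
      have hdiag : ∑ j : Fin b, V j j = 0 := by
        simp [hVdef]
      rw [hall, hdiag]
      ring
    linarith [h2T, hcalc]
  -- rewrite the goal sum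
  have hgoal : ∑ p ∈ T, (s p.1 : ℝ) * (s p.2 : ℝ) *
          ((Pi.single p.1 (1 : ℝ) - Pi.single p.2 (1 : ℝ)) ⬝ᵥ
            (Ctp *ᵥ (Pi.single p.1 (1 : ℝ) - Pi.single p.2 (1 : ℝ))))
      = ∑ p ∈ T, (s p.1 : ℝ) * (s p.2 : ℝ) * V p.1 p.2 := by
    refine Finset.sum_congr rfl fun p _ => ?_
    rw [quadform_aux]
  rw [hgoal]
  have hsmin : ∀ p : Fin b × Fin b, (0:ℝ) ≤ (s p.1 : ℝ) * (s p.2 : ℝ) - (s0:ℝ)^2 := by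
    intro p
    have h1 : (s0:ℝ) ≤ (s p.1 : ℝ) := by exact_mod_cast hs0le p.1
    have h2 : (s0:ℝ) ≤ (s p.2 : ℝ) := by exact_mod_cast hs0le p.2
    have h0 : (0:ℝ) ≤ (s0:ℝ) := by positivity
    nlinarith
  have key : ∑ p ∈ T, (s p.1 : ℝ) * (s p.2 : ℝ) * V p.1 p.2
      = ∑ p ∈ T, ((s p.1 : ℝ) * (s p.2 : ℝ) - (s0:ℝ)^2) * V p.1 p.2
        + (s0:ℝ)^2 * ∑ p ∈ T, V p.1 p.2 := by
    rw [Finset.mul_sum, ← Finset.sum_add_distrib]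
    refine Finset.sum_congr rfl fun p _ => ?_
    ring
  rw [key, hVsum]
  have hbound1 : ∑ p ∈ T, ((s p.1 : ℝ) * (s p.2 : ℝ) - (s0:ℝ)^2) * V p.1 p.2
      ≥ (2 / (k:ℝ)) * ∑ p ∈ T, ((s p.1 : ℝ) * (s p.2 : ℝ) - (s0:ℝ)^2) := by
    rw [Finset.mul_sum]
    refine Finset.sum_le_sum fun p hp => ?_
    have hne : p.1 ≠ p.2 := by
      simp only [hT, Finset.mem_filter] at hp
      exact ne_of_lt hp.2
    have := hVlb p.1 p.2 hne
    have h0 := hsmin p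
    calc (2 / (k:ℝ)) * ((s p.1 : ℝ) * (s p.2 : ℝ) - (s0:ℝ)^2)
        = ((s p.1 : ℝ) * (s p.2 : ℝ) - (s0:ℝ)^2) * (2 / (k:ℝ)) := by ring
      _ ≤ ((s p.1 : ℝ) * (s p.2 : ℝ) - (s0:ℝ)^2) * V p.1 p.2 :=
          mul_le_mul_of_nonneg_left this h0
  have hbound2 : (s0:ℝ)^2 * ((b:ℝ) * Ctp.trace) ≥ (s0:ℝ)^2 * (b:ℝ) * Ltilde := by
    have h0 : (0:ℝ) ≤ (s0:ℝ)^2 * (b:ℝ) := by positivity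
    calc (s0:ℝ)^2 * ((b:ℝ) * Ctp.trace) = ((s0:ℝ)^2 * (b:ℝ)) * Ctp.trace := by ring
      _ ≥ ((s0:ℝ)^2 * (b:ℝ)) * Ltilde := mul_le_mul_of_nonneg_left htr h0
      _ = (s0:ℝ)^2 * (b:ℝ) * Ltilde := by ring
  linarith [hbound1, hbound2]
end
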